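/- Let Ω be a bounded hyperconvex domain in ℂ^n containing the origin 0 and let φ be a plurisubharmonic function on Ω. Then for all real numbers s > t > -n one has c_s(φ) ≤ ((s+n)/(t+n))·c_t(φ), where the inequality is understood in the extended reals [0,+∞]. -/

import Mathlib

open MeasureTheory Filter Metric Topology Complex
open scoped ENNReal EReal

noncomputable section

/-- `ℂ^n` with its Euclidean (Hermitian) norm. -/
abbrev Cn (n : ℕ) : Type := EuclideanSpace ℂ (Fin n)

/-- Lebesgue measure on `ℂ^n ≅ ℝ^{2n}`. -/
instance Cn.measureSpace (n : ℕ) : MeasureSpace (Cn n) :=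
  { toMeasurableSpace := inferInstance
    volume := Measure.map (MeasurableEquiv.toLp 2 (Fin n → ℂ)) volume }

/-- Extended-real-valued logarithm, sending `0` (and negative numbers) to `-∞`. -/
def elog (x : ℝ) : EReal := if x ≤ 0 then (⊥ : EReal) else ((Real.log x : ℝ) : EReal)

/-- `exp : EReal → ℝ≥0∞`, with `exp (-∞) = 0` and `exp (+∞) = +∞`. -/
def erealExp (x : EReal) : ℝ≥0∞ :=
  if x = ⊤ then ⊤ else if x = ⊥ then 0 else ENNReal.ofReal (Real.exp x.toReal)

/-- The positive part of an extended real number, as an element of `ℝ≥0∞`. -/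
def erealPosPart (x : EReal) : ℝ≥0∞ := if x = ⊤ then ⊤ else ENNReal.ofReal x.toReal

/-- The integral of an `EReal`-valued function: upper integral of the positive part minus the
upper integral of the negative part. -/
def erealIntegral {α : Type*} [MeasurableSpace α] (μ : Measure α) (f : α → EReal) : EReal :=
  ((∫⁻ a, erealPosPart (f a) ∂μ : ℝ≥0∞) : EReal) -
    ((∫⁻ a, erealPosPart (-(f a)) ∂μ : ℝ≥0∞) : EReal)

/-- A function `f : ℂ → [-∞, ∞)` is subharmonic on an open set `U ⊆ ℂ` if it is upper
semicontinuous on `U` and satisfies the sub-mean value inequality on circles contained in `U`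
(written in the form `2π · f(z) ≤ ∫_0^{2π} f(z + r e^{iθ}) dθ`). -/
def SubhOn (f : ℂ → EReal) (U : Set ℂ) : Prop :=
  UpperSemicontinuousOn f U ∧
  ∀ z ∈ U, ∀ r : ℝ, 0 < r → closedBall z r ⊆ U →
    ((2 * Real.pi : ℝ) : EReal) * f z ≤
      erealIntegral (volume.restrict (Set.Ioc (0:ℝ) (2 * Real.pi)))
        (fun θ : ℝ => f (z + (r : ℂ) * Complex.exp (θ * Complex.I)))

/-- A function `φ : ℂ^n → [-∞, ∞)` is plurisubharmonic on `Ω` if it is upper semicontinuous on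
`Ω`, not identically `-∞`, never `+∞`, and its restriction to every complex line is subharmonic. -/
def PshOn {n : ℕ} (φ : Cn n → EReal) (Ω : Set (Cn n)) : Prop :=
  UpperSemicontinuousOn φ Ω ∧ (∃ z ∈ Ω, φ z ≠ ⊥) ∧ (∀ z ∈ Ω, φ z ≠ ⊤) ∧
  ∀ a v : Cn n, SubhOn (fun w : ℂ => φ (a + w • v)) {w : ℂ | a + w • v ∈ Ω}

/-- A domain in `ℂ^n`: a nonempty connected open set. -/
def IsCnDomain {n : ℕ} (Ω : Set (Cn n)) : Prop := IsOpen Ω ∧ IsConnected Ω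

/-- The Lelong number of `φ` at the origin: `ν_φ(0) = liminf_{z → 0} φ(z) / log ‖z‖`. -/
def lelong {n : ℕ} (φ : Cn n → EReal) : EReal :=
  liminf (fun z : Cn n => φ z * (((Real.log ‖z‖)⁻¹ : ℝ) : EReal)) (𝓝[≠] (0 : Cn n))

/-- The Lelong number at `0` of the restriction of `φ` to the complex line through `0` with
direction `v`: `ν_{φ|_l}(0) = liminf_{λ → 0} φ(λ v) / log |λ|`. -/
def lelongLine {n : ℕ} (φ : Cn n → EReal) (v : Cn n) : EReal :=
  liminf (fun w : ℂ => φ (w • v) * (((Real.log ‖w‖)⁻¹ : ℝ) : EReal)) (𝓝[≠] (0 : ℂ))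

/-- `‖z‖^{2t} e^{-2cφ}` is (Lebesgue) integrable on some neighborhood of the origin. -/
def lctIntegrable {n : ℕ} (t c : ℝ) (φ : Cn n → EReal) : Prop :=
  ∃ U ∈ 𝓝 (0 : Cn n),
    (∫⁻ z in U, ENNReal.ofReal (‖z‖ ^ (2 * t)) *
        erealExp (((-(2 * c) : ℝ) : EReal) * φ z) ∂volume) < ⊤

/-- The weighted log canonical threshold
`c_t(φ) = sup {c ≥ 0 : ‖z‖^{2t} e^{-2cφ}` is integrable near `0}`, as an element of `[0, ∞]`. -/
def lct {n : ℕ} (t : ℝ) (φ : Cn n → EReal) : ℝ≥0∞ :=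
  ⨆ c ∈ {c : ℝ | 0 ≤ c ∧ lctIntegrable t c φ}, ENNReal.ofReal c

/-- A bounded domain `Ω ⊆ ℂⁿ` is hyperconvex if it carries a negative plurisubharmonic
exhaustion function `ρ`, i.e. `{ρ < -ε}` is relatively compact in `Ω` for every `ε > 0`. -/
def IsHyperconvex {n : ℕ} (Ω : Set (Cn n)) : Prop :=
  IsCnDomain Ω ∧ Bornology.IsBounded Ω ∧
  ∃ ρ : Cn n → EReal, PshOn ρ Ω ∧ (∀ z ∈ Ω, ρ z < 0) ∧
    ∀ ε : ℝ, 0 < ε →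
      IsCompact (closure {z | z ∈ Ω ∧ ρ z < ((-ε : ℝ) : EReal)}) ∧
      closure {z | z ∈ Ω ∧ ρ z < ((-ε : ℝ) : EReal)} ⊆ Ω

/-!
Hölder interpolation: for `0 ≤ θ < 1` with `θ (s+n) < t+n`, the exponent `α` defined by
`2t = θ·2s + (1-θ)·α` satisfies `α > -2n`, and weighted AM-GM gives pointwise
`‖z‖^{2t} e^{-2θcφ} ≤ ‖z‖^{2s} e^{-2cφ} + ‖z‖^α`.
Since `‖z‖^α` is integrable near `0`, integrability for `(s, c)` implies integrability for
`(t, θc)`; letting `θ ↑ (t+n)/(s+n)` gives `c_s(φ)·(t+n)/(s+n) ≤ c_t(φ)`.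
-/

lemma erealExp_eq_exp : erealExp = EReal.exp := by
  funext x
  induction x using EReal.rec <;> simp [erealExp]

lemma erealExp_coe_mul (a : ℝ) (x : EReal) : erealExp ((a : EReal) * x) = EReal.exp x ^ a := by
  rw [erealExp_eq_exp, mul_comm, EReal.exp_mul]

lemma ENNReal.rpow_mul_rpow_one_sub_le_add (u v : ℝ≥0∞) {θ : ℝ} (hθ₀ : 0 ≤ θ) (hθ₁ : θ ≤ 1) :
    u ^ θ * v ^ (1 - θ) ≤ u + v :=
  calc u ^ θ * v ^ (1 - θ) ≤ (u + v) ^ θ * (u + v) ^ (1 - θ) := by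
        gcongr
        exacts [le_self_add, le_add_self]
    _ = u + v := by rw [← ENNReal.rpow_add_of_nonneg _ _ hθ₀ (by linarith)]; simp

lemma ofReal_rpow_mul_rpow_le {r : ℝ} (hr : 0 < r) (E : ℝ≥0∞) {p q a θ : ℝ} (hθ₀ : 0 ≤ θ)
    (hθ₁ : θ ≤ 1) :
    ENNReal.ofReal (r ^ (θ * p + (1 - θ) * q)) * E ^ (a * θ) ≤
      ENNReal.ofReal (r ^ p) * E ^ a + ENNReal.ofReal (r ^ q) := by
  have hsplit : ENNReal.ofReal (r ^ (θ * p + (1 - θ) * q)) * E ^ (a * θ) =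
      (ENNReal.ofReal (r ^ p) * E ^ a) ^ θ * ENNReal.ofReal (r ^ q) ^ (1 - θ) := by
    rw [ENNReal.mul_rpow_of_nonneg _ _ hθ₀, ENNReal.rpow_mul,
      ENNReal.ofReal_rpow_of_nonneg (by positivity) hθ₀,
      ENNReal.ofReal_rpow_of_nonneg (by positivity) (by linarith), ← Real.rpow_mul hr.le,
      ← Real.rpow_mul hr.le, Real.rpow_add hr, ENNReal.ofReal_mul (by positivity), mul_comm p,
      mul_comm q]
    ring
  rw [hsplit]
  exact ENNReal.rpow_mul_rpow_one_sub_le_add _ _ hθ₀ hθ₁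

lemma lintegral_ball_norm_rpow_lt_top {E : Type*} [NormedAddCommGroup E] [NormedSpace ℝ E]
    [FiniteDimensional ℝ E] [MeasurableSpace E] [BorelSpace E] {μ : Measure E}
    [μ.IsAddHaarMeasure] (hd : 1 ≤ Module.finrank ℝ E) {α : ℝ}
    (hα : -(Module.finrank ℝ E : ℝ) < α) (r : ℝ) :
    ∫⁻ x in ball 0 r, ENNReal.ofReal (‖x‖ ^ α) ∂μ < ⊤ := by
  refine IntegrableOn.setLIntegral_lt_top <|
    integrableOn_ball_of_norm_le_rpow (C := 1) (α := -α) hd (by linarith) ?_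
      (measurable_norm.pow_const α).aestronglyMeasurable
  exact ae_of_all _ fun x => by simp [abs_of_nonneg (Real.rpow_nonneg (norm_nonneg x) α)]

instance Cn.isAddHaarMeasure (n : ℕ) : (volume : Measure (Cn n)).IsAddHaarMeasure :=
  (WithLp.linearEquiv 2 ℝ (Fin n → ℂ)).symm.toContinuousLinearEquiv.isAddHaarMeasure_map
    (volume : Measure (Fin n → ℂ))

lemma Cn.finrank_real (n : ℕ) : Module.finrank ℝ (Cn n) = 2 * n := by
  rw [← Module.finrank_mul_finrank ℝ ℂ (Cn n)]
  simp

lemma lctIntegrable_interpolate {n : ℕ} (hn : 0 < n) {φ : Cn n → EReal} {s t c θ : ℝ}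
    (hθ₀ : 0 ≤ θ) (hθ₁ : θ < 1) (hθ : θ * (s + n) < t + n) (h : lctIntegrable s c φ) :
    lctIntegrable t (θ * c) φ := by
  obtain ⟨U, hU, hfin⟩ := h
  have hd : 0 < Module.finrank ℝ (Cn n) := by rw [Cn.finrank_real]; omega
  have := Module.nontrivial_of_finrank_pos hd
  set α : ℝ := (2 * t - θ * (2 * s)) / (1 - θ) with hα_def
  have h1θ : 0 < 1 - θ := by linarith
  have hα : -(Module.finrank ℝ (Cn n) : ℝ) < α := by
    rw [Cn.finrank_real, hα_def, lt_div_iff₀ h1θ]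
    push_cast
    linarith
  have ht : 2 * t = θ * (2 * s) + (1 - θ) * α := by
    rw [hα_def, mul_div_cancel₀ _ h1θ.ne']
    ring
  -- `z = 0` is excluded because of the convention `0 ^ 0 = 1`; it is a null set.
  have hpointwise : ∀ z : Cn n, z ≠ 0 →
      ENNReal.ofReal (‖z‖ ^ (2 * t)) * erealExp (((-(2 * (θ * c)) : ℝ) : EReal) * φ z) ≤
        ENNReal.ofReal (‖z‖ ^ (2 * s)) * erealExp (((-(2 * c) : ℝ) : EReal) * φ z) +
          ENNReal.ofReal (‖z‖ ^ α) := by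
    intro z hz
    rw [erealExp_coe_mul, erealExp_coe_mul, ht, show -(2 * (θ * c)) = -(2 * c) * θ by ring]
    exact ofReal_rpow_mul_rpow_le (norm_pos_iff.2 hz) _ hθ₀ hθ₁.le
  refine ⟨U ∩ ball 0 1, inter_mem hU (ball_mem_nhds 0 one_pos), ?_⟩
  calc _ ≤ ∫⁻ z in U ∩ ball 0 1,
          ENNReal.ofReal (‖z‖ ^ (2 * s)) * erealExp (((-(2 * c) : ℝ) : EReal) * φ z) +
            ENNReal.ofReal (‖z‖ ^ α) :=
        lintegral_mono_ae <| ae_restrict_of_ae <| by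
          filter_upwards [compl_mem_ae_iff.2 (measure_singleton (0 : Cn n))] with z hz
          exact hpointwise z hz
    _ = (∫⁻ z in U ∩ ball 0 1,
          ENNReal.ofReal (‖z‖ ^ (2 * s)) * erealExp (((-(2 * c) : ℝ) : EReal) * φ z)) +
          ∫⁻ z in U ∩ ball 0 1, ENNReal.ofReal (‖z‖ ^ α) :=
        lintegral_add_right _ (measurable_norm.pow_const α).ennreal_ofReal
    _ < ⊤ := ENNReal.add_lt_top.2
        ⟨(lintegral_mono_set Set.inter_subset_left).trans_lt hfin,
          (lintegral_mono_set Set.inter_subset_right).trans_lt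
            (lintegral_ball_norm_rpow_lt_top hd hα 1)⟩

lemma ofReal_le_lct {n : ℕ} {t a : ℝ} {φ : Cn n → EReal}
    (h : ∀ c, 0 ≤ c → c < a → lctIntegrable t c φ) : ENNReal.ofReal a ≤ lct t φ := by
  refine le_of_forall_lt_imp_le_of_dense fun r hr => ?_
  have hr_top : r ≠ ⊤ := (hr.trans ENNReal.ofReal_lt_top).ne
  rw [← ENNReal.ofReal_toReal hr_top] at hr ⊢
  exact le_biSup ENNReal.ofReal
    ⟨ENNReal.toReal_nonneg, h _ ENNReal.toReal_nonneg (ENNReal.ofReal_lt_ofReal_iff'.1 hr).1⟩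

lemma ofReal_mul_le_lct {n : ℕ} (hn : 0 < n) {φ : Cn n → EReal} {s t c : ℝ} (hst : t < s)
    (ht : -(n : ℝ) < t) (hc : 0 ≤ c) (h : lctIntegrable s c φ) :
    ENNReal.ofReal (c * ((t + n) / (s + n))) ≤ lct t φ := by
  have htn : 0 < t + n := by linarith
  have hsn : 0 < s + n := by linarith
  refine ofReal_le_lct fun c' hc' hc'lt => ?_
  have hc_pos : 0 < c := pos_of_mul_pos_left (hc'.trans_lt hc'lt) (by positivity)
  have hθ : c' / c * (s + n) < t + n := by
    rw [div_mul_eq_mul_div, div_lt_iff₀ hc_pos]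
    have := (lt_div_iff₀ hsn).1 (by rwa [mul_div_assoc])
    linarith
  have hθ₁ : c' / c < 1 := lt_of_mul_lt_mul_right (a := s + n) (by linarith) hsn.le
  simpa only [div_mul_cancel₀ _ hc_pos.ne'] using
    lctIntegrable_interpolate hn (div_nonneg hc' hc) hθ₁ hθ h

theorem statement10_general {n : ℕ} (hn : 0 < n) (φ : Cn n → EReal)
    (s t : ℝ) (hst : t < s) (ht : -(n : ℝ) < t) :
    lct s φ ≤ ENNReal.ofReal ((s + n) / (t + n)) * lct t φ := by
  refine iSup₂_le fun c hc => ?_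
  have htn : 0 < t + n := by linarith
  have hsn : 0 < s + n := by linarith
  calc ENNReal.ofReal c
      = ENNReal.ofReal ((s + n) / (t + n)) * ENNReal.ofReal (c * ((t + n) / (s + n))) := by
        rw [← ENNReal.ofReal_mul (by positivity)]
        field_simp
    _ ≤ ENNReal.ofReal ((s + n) / (t + n)) * lct t φ := by
        gcongr
        exact ofReal_mul_le_lct hn hst ht hc.1 hc.2

/-- On a bounded hyperconvex domain `Ω ∋ 0`, for all `s > t > -n` one has
`c_s(φ) ≤ ((s+n)/(t+n))·c_t(φ)` in `[0,∞]`. -/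
theorem statement10 {n : ℕ} (hn : 0 < n) (Ω : Set (Cn n)) (hΩ : IsHyperconvex Ω)
    (h0 : (0 : Cn n) ∈ Ω) (φ : Cn n → EReal) (hφ : PshOn φ Ω)
    (s t : ℝ) (hst : t < s) (ht : -(n : ℝ) < t) :
    lct s φ ≤ ENNReal.ofReal ((s + n) / (t + n)) * lct t φ :=
  statement10_general hn φ s t hst ht
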